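/- Let T be a rooted tree, 1 < p < ∞, ρ a positive weight on T, μ a positive measure on the closure T̄ of T. The tree condition Σ_{β ≥ α} ρ(β)^{1−p'} μ(S̄(β))^{p'} ≤ C·μ(S̄(α)) for all α ∈ T is equivalent to the maximal inequality Σ_{α ∈ T} (Mg(α))^{p'} σ(α) ≤ C' ∫_{T̄} g^{p'} dμ for all g ≥ 0, where Mg(α) = max_{o ≤ β ≤ α} (1/μ(S̄(β))) ∫_{S̄(β)} g dμ and σ(α) = ρ(α)^{1−p'} μ(S̄(α))^{p'}. -/

import Mathlib

/-!
Weak type (1,1): the minimal elements `γ` of the level set `{M g > t}` have pairwise disjoint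
shadows, on each of which `g` has mean `> t`, and every point of the level set lies above one of
them; summing the tree condition over these `γ` gives `t · σ{M g > t} ≤ C ∫ g`. Since
`M g ≤ t + M (g 1_{g > t})`, the same bound holds for `σ{M g > 2t}` with `g` replaced by its part
above `t`, and summing over the dyadic levels `t = 2^k` gives the `L^{p'}` bound.
Conversely, testing the maximal inequality on `g = 1_{S̄(α)}`, for which `M g ≥ 1` on every
`β ≥ α`, gives the tree condition.
-/

open MeasureTheory ENNReal

theorem tsum_ite_nonpos_two_zpow_rpow (r : ℝ) :
    ∑' k : ℤ, (if k ≤ 0 then ((2 : ℝ≥0∞) ^ k) ^ r else 0) = (1 - 2 ^ (-r))⁻¹ := by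
  have hsupp : (Function.support fun k : ℤ => if k ≤ 0 then ((2 : ℝ≥0∞) ^ k) ^ r else 0) ⊆
      Set.range fun n : ℕ => -(n : ℤ) := by
    intro k hk
    have : k ≤ 0 := by by_contra h; simp [h] at hk
    exact ⟨k.natAbs, by simp only; omega⟩
  rw [← (neg_injective.comp Nat.cast_injective).tsum_eq hsupp, ← ENNReal.tsum_geometric]
  refine tsum_congr fun n => ?_
  simp only [Function.comp_apply, Left.neg_nonpos_iff, Nat.cast_nonneg, if_true]
  rw [← ENNReal.rpow_intCast, ← ENNReal.rpow_mul, ← ENNReal.rpow_natCast, ← ENNReal.rpow_mul]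
  congr 1
  push_cast
  ring

theorem tsum_ite_two_zpow_lt_rpow_le {r : ℝ} (hr : 0 < r) (v : ℝ≥0∞) :
    ∑' k : ℤ, (if (2 : ℝ≥0∞) ^ k < v then ((2 : ℝ≥0∞) ^ k) ^ r else 0) ≤
      (1 - 2 ^ (-r))⁻¹ * v ^ r := by
  rcases eq_or_ne v 0 with rfl | hv0
  · simp
  rcases eq_or_ne v ⊤ with rfl | hvtop
  · have : (1 - (2 : ℝ≥0∞) ^ (-r))⁻¹ ≠ 0 := by simp
    simp [ENNReal.top_rpow_of_pos hr, ENNReal.mul_top this]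
  obtain ⟨m, hm, hvm⟩ := ENNReal.exists_mem_Ioc_zpow hv0 hvtop one_lt_two ofNat_ne_top
  have h2m : ((2 : ℝ≥0∞) ^ m) ^ r ≤ v ^ r := ENNReal.rpow_le_rpow hm.le hr.le
  calc ∑' k : ℤ, (if (2 : ℝ≥0∞) ^ k < v then ((2 : ℝ≥0∞) ^ k) ^ r else 0)
      ≤ ∑' k : ℤ, (if k ≤ m then ((2 : ℝ≥0∞) ^ k) ^ r else 0) := by
        refine ENNReal.tsum_le_tsum fun k => ?_
        split_ifs with hk hkm
        · exact le_rfl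
        · exact absurd (hk.trans_le (hvm.trans (ENNReal.zpow_le_of_le one_le_two (by omega))))
            (lt_irrefl _)
        all_goals exact zero_le
    _ = ∑' k : ℤ, (if k + m ≤ m then ((2 : ℝ≥0∞) ^ (k + m)) ^ r else 0) :=
        ((Equiv.addRight m).tsum_eq fun k => if k ≤ m then ((2 : ℝ≥0∞) ^ k) ^ r else 0).symm
    _ = ((2 : ℝ≥0∞) ^ m) ^ r * ∑' k : ℤ, (if k ≤ 0 then ((2 : ℝ≥0∞) ^ k) ^ r else 0) := by
        rw [← ENNReal.tsum_mul_left]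
        refine tsum_congr fun k => ?_
        simp only [add_le_iff_nonpos_left, mul_ite, mul_zero]
        rw [ENNReal.zpow_add two_ne_zero ofNat_ne_top, ENNReal.mul_rpow_of_nonneg _ _ hr.le,
          mul_comm]
    _ ≤ (1 - 2 ^ (-r))⁻¹ * v ^ r := by
        rw [tsum_ite_nonpos_two_zpow_rpow r, mul_comm]
        gcongr

theorem tsum_two_zpow_rpow_mul_ite_le {q : ℝ} (hq : 1 < q) (v : ℝ≥0∞) :
    ∑' k : ℤ, ((2 : ℝ≥0∞) ^ k) ^ (q - 1) * (if (2 : ℝ≥0∞) ^ k < v then v else 0) ≤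
      (1 - 2 ^ (1 - q))⁻¹ * v ^ q :=
  calc ∑' k : ℤ, ((2 : ℝ≥0∞) ^ k) ^ (q - 1) * (if (2 : ℝ≥0∞) ^ k < v then v else 0)
      = v * ∑' k : ℤ, (if (2 : ℝ≥0∞) ^ k < v then ((2 : ℝ≥0∞) ^ k) ^ (q - 1) else 0) := by
        rw [← ENNReal.tsum_mul_left]
        refine tsum_congr fun k => ?_
        split_ifs <;> simp [mul_comm]
    _ ≤ v * ((1 - 2 ^ (1 - q))⁻¹ * v ^ (q - 1)) := by
        gcongr
        simpa only [neg_sub] using tsum_ite_two_zpow_lt_rpow_le (sub_pos.2 hq) v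
    _ = (1 - 2 ^ (1 - q))⁻¹ * v ^ q := by
        rw [mul_left_comm]
        congr 1
        conv_rhs => rw [← add_sub_cancel 1 q, ENNReal.rpow_add_of_nonneg _ _ zero_le_one
          (by linarith), ENNReal.rpow_one]

theorem inv_one_sub_two_rpow_ne_top {q : ℝ} (hq : 1 < q) : (1 - (2 : ℝ≥0∞) ^ (1 - q))⁻¹ ≠ ⊤ :=
  ENNReal.inv_ne_top.2
    (tsub_pos_of_lt (ENNReal.rpow_lt_one_of_one_lt_of_neg one_lt_two (by linarith))).ne'

theorem rpow_le_four_rpow_mul_tsum_ite {q : ℝ} (hq : 0 < q) (x : ℝ≥0∞) :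
    x ^ q ≤ 4 ^ q * ∑' k : ℤ, (if 2 * (2 : ℝ≥0∞) ^ k < x then ((2 : ℝ≥0∞) ^ k) ^ q else 0) := by
  rcases eq_or_ne x 0 with rfl | hx0
  · simp [ENNReal.zero_rpow_of_pos hq]
  rcases eq_or_ne x ⊤ with rfl | hxtop
  · have hterm : ∀ k : ℤ, 2 * (2 : ℝ≥0∞) ^ k < ⊤ := fun k =>
      ENNReal.mul_lt_top ofNat_lt_top (ENNReal.zpow_lt_top two_ne_zero ofNat_ne_top k)
    suffices h : ∑' k : ℤ, ((2 : ℝ≥0∞) ^ k) ^ q = ⊤ by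
      simp only [hterm, if_true, h, ENNReal.top_rpow_of_pos hq]
      rw [ENNReal.mul_top (by positivity)]
    refine top_le_iff.1 ?_
    calc ⊤ = ∑' _ : ℕ, (1 : ℝ≥0∞) := (ENNReal.tsum_const_eq_top_of_ne_zero one_ne_zero).symm
      _ ≤ ∑' n : ℕ, ((2 : ℝ≥0∞) ^ (n : ℤ)) ^ q := ENNReal.tsum_le_tsum fun n =>
          ENNReal.one_le_rpow (by rw [zpow_natCast]; exact one_le_pow₀ one_le_two) hq
      _ ≤ ∑' k : ℤ, ((2 : ℝ≥0∞) ^ k) ^ q :=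
          ENNReal.tsum_comp_le_tsum_of_injective Nat.cast_injective fun k : ℤ => _
  obtain ⟨m, hm, hxm⟩ := ENNReal.exists_mem_Ioc_zpow hx0 hxtop one_lt_two ofNat_ne_top
  have hpow : ∀ n : ℤ, (2 : ℝ≥0∞) ^ (n + 1) = 2 * 2 ^ n := fun n => by
    rw [ENNReal.zpow_add two_ne_zero ofNat_ne_top, zpow_one, mul_comm]
  calc x ^ q ≤ (4 * (2 : ℝ≥0∞) ^ (m - 1)) ^ q := by
        refine ENNReal.rpow_le_rpow (hxm.trans_eq ?_) hq.le
        rw [show m + 1 = m - 1 + 1 + 1 by ring, hpow, hpow, ← mul_assoc]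
        norm_num
    _ = 4 ^ q * (if 2 * (2 : ℝ≥0∞) ^ (m - 1) < x then ((2 : ℝ≥0∞) ^ (m - 1)) ^ q else 0) := by
        rw [← hpow, sub_add_cancel, if_pos hm, ENNReal.mul_rpow_of_nonneg _ _ hq.le]
    _ ≤ _ := by gcongr; exact ENNReal.le_tsum (m - 1)

theorem tsum_indicator_le_tsum_minimal_tsum_Ici {T : Type*} [PartialOrder T] [WellFoundedLT T]
    (P : T → Prop) (σ : T → ℝ≥0∞) :
    ∑' α, {α | P α}.indicator σ α ≤ ∑' γ : {γ // Minimal P γ}, ∑' β : {β // γ.1 ≤ β}, σ β := by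
  choose m hm using fun α : {α // P α} => exists_minimal_le_of_wellFoundedLT P α.1 α.2
  have hinj : Function.Injective fun α : {α // P α} =>
      (⟨⟨m α, (hm α).2⟩, ⟨α.1, (hm α).1⟩⟩ : Σ γ : {γ // Minimal P γ}, {β // γ.1 ≤ β}) :=
    fun α α' h => Subtype.ext (congrArg (fun x => x.2.1) h)
  rw [← tsum_subtype,
    ← ENNReal.tsum_sigma' fun x : Σ γ : {γ // Minimal P γ}, {β // γ.1 ≤ β} => σ x.2.1]
  exact ENNReal.tsum_comp_le_tsum_of_injective hinj fun x => σ x.2.1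

theorem tsum_setLIntegral_minimal_le {T Ω : Type*} [PartialOrder T] [Countable T]
    [MeasurableSpace Ω] {μ : Measure Ω} {S : T → Set Ω} (hmeas : ∀ α, MeasurableSet (S α))
    (hdisj : ∀ α β : T, ¬ α ≤ β → ¬ β ≤ α → S α ∩ S β = ∅) (P : T → Prop)
    (g : Ω → ℝ≥0∞) :
    ∑' γ : {γ // Minimal P γ}, ∫⁻ x in S γ, g x ∂μ ≤ ∫⁻ x, g x ∂μ := by
  have hpair : Pairwise fun γ γ' : {γ // Minimal P γ} => Disjoint (S γ) (S γ') := by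
    intro γ γ' hne
    have hmin := setOfPred_minimal_antichain P
    rw [Set.disjoint_iff_inter_eq_empty]
    exact hdisj _ _ (hmin γ.2 γ'.2 (Subtype.coe_ne_coe.2 hne))
      (hmin γ'.2 γ.2 (Subtype.coe_ne_coe.2 hne.symm))
  rw [← lintegral_iUnion (s := fun γ : {γ // Minimal P γ} => S γ) (fun γ => hmeas γ) hpair]
  exact setLIntegral_le_lintegral _ _

noncomputable def treeMaximal {T Ω : Type*} [PartialOrder T] [MeasurableSpace Ω]
    (μ : Measure Ω) (S : T → Set Ω) (g : Ω → ℝ≥0∞) (α : T) : ℝ≥0∞ :=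
  ⨆ β ∈ Set.Iic α, (∫⁻ x in S β, g x ∂μ) / μ (S β)

namespace treeMaximal

variable {T Ω : Type*} [PartialOrder T] [MeasurableSpace Ω] {μ : Measure Ω} {S : T → Set Ω}
  {g : Ω → ℝ≥0∞}

theorem average_le {α β : T} (h : β ≤ α) :
    (∫⁻ x in S β, g x ∂μ) / μ (S β) ≤ treeMaximal μ S g α :=
  le_biSup (fun β => (∫⁻ x in S β, g x ∂μ) / μ (S β)) h

theorem mul_measure_le_setLIntegral_of_minimal {t : ℝ≥0∞} {γ : T}
    (hγ : Minimal (fun α => t < treeMaximal μ S g α) γ) :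
    t * μ (S γ) ≤ ∫⁻ x in S γ, g x ∂μ := by
  obtain ⟨β, hβγ, hβ⟩ := lt_biSup_iff.1 hγ.1
  have hβ' : t < treeMaximal μ S g β := hβ.trans_le (average_le le_rfl)
  rw [← hγ.eq_of_le hβ' hβγ]
  exact ENNReal.mul_le_of_le_div hβ.le

theorem mul_tsum_indicator_le [Countable T] [WellFoundedLT T]
    (hmeas : ∀ α, MeasurableSet (S α))
    (hdisj : ∀ α β : T, ¬ α ≤ β → ¬ β ≤ α → S α ∩ S β = ∅)
    {σ : T → ℝ≥0∞} {C : ℝ≥0∞} (htree : ∀ α, ∑' β : {β // α ≤ β}, σ β ≤ C * μ (S α))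
    (g : Ω → ℝ≥0∞) (t : ℝ≥0∞) :
    t * ∑' α, {α | t < treeMaximal μ S g α}.indicator σ α ≤ C * ∫⁻ x, g x ∂μ := by
  set P := fun α => t < treeMaximal μ S g α
  calc t * ∑' α, {α | P α}.indicator σ α
      ≤ t * ∑' γ : {γ // Minimal P γ}, ∑' β : {β // γ.1 ≤ β}, σ β := by
        gcongr; exact tsum_indicator_le_tsum_minimal_tsum_Ici P σ
    _ ≤ t * ∑' γ : {γ // Minimal P γ}, C * μ (S γ) := by
        gcongr with γ; exact htree γ
    _ = C * ∑' γ : {γ // Minimal P γ}, t * μ (S γ) := by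
        rw [ENNReal.tsum_mul_left, ENNReal.tsum_mul_left, mul_left_comm]
    _ ≤ C * ∑' γ : {γ // Minimal P γ}, ∫⁻ x in S γ, g x ∂μ := by
        gcongr with γ; exact mul_measure_le_setLIntegral_of_minimal γ.2
    _ ≤ C * ∫⁻ x, g x ∂μ := by
        gcongr; exact tsum_setLIntegral_minimal_le hmeas hdisj P g

theorem le_add_indicator (hg : Measurable g) (t : ℝ≥0∞) (α : T) :
    treeMaximal μ S g α ≤ t + treeMaximal μ S ({x | t < g x}.indicator g) α := by
  refine iSup₂_le fun β hβ => ?_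
  have hsplit : (∫⁻ x in S β, g x ∂μ) =
      (∫⁻ x in S β, {x | t < g x}ᶜ.indicator g x ∂μ) +
        ∫⁻ x in S β, {x | t < g x}.indicator g x ∂μ := by
    rw [← lintegral_add_left ((hg.indicator (measurableSet_lt measurable_const hg).compl))]
    congr 1
    ext x
    exact (Set.indicator_compl_add_self_apply _ _ _).symm
  rw [hsplit, ENNReal.add_div]
  gcongr
  · refine ENNReal.div_le_of_le_mul ?_
    calc (∫⁻ x in S β, {x | t < g x}ᶜ.indicator g x ∂μ) ≤ ∫⁻ _ in S β, t ∂μ := by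
          refine lintegral_mono fun x => ?_
          by_cases h : t < g x <;> simp [h, le_of_not_gt]
      _ = t * μ (S β) := setLIntegral_const _ _
  · exact average_le hβ

theorem mul_tsum_indicator_two_mul_lt_le [Countable T] [WellFoundedLT T]
    (hmeas : ∀ α, MeasurableSet (S α))
    (hdisj : ∀ α β : T, ¬ α ≤ β → ¬ β ≤ α → S α ∩ S β = ∅)
    {σ : T → ℝ≥0∞} {C : ℝ≥0∞} (htree : ∀ α, ∑' β : {β // α ≤ β}, σ β ≤ C * μ (S α))
    (hg : Measurable g) (t : ℝ≥0∞) :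
    t * ∑' α, {α | 2 * t < treeMaximal μ S g α}.indicator σ α ≤
      C * ∫⁻ x, {x | t < g x}.indicator g x ∂μ := by
  have hsub : {α | 2 * t < treeMaximal μ S g α} ⊆
      {α | t < treeMaximal μ S ({x | t < g x}.indicator g) α} := fun α hα => by
    by_contra hle
    have := (le_add_indicator hg t α).trans (add_le_add le_rfl (not_lt.1 hle))
    exact lt_irrefl _ (hα.trans_le (this.trans_eq (two_mul t).symm))
  calc t * ∑' α, {α | 2 * t < treeMaximal μ S g α}.indicator σ α
      ≤ t * ∑' α, {α | t < treeMaximal μ S ({x | t < g x}.indicator g) α}.indicator σ α := by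
        gcongr
    _ ≤ C * ∫⁻ x, {x | t < g x}.indicator g x ∂μ := mul_tsum_indicator_le hmeas hdisj htree _ t

theorem tsum_rpow_mul_le [Countable T] [WellFoundedLT T]
    (hmeas : ∀ α, MeasurableSet (S α))
    (hdisj : ∀ α β : T, ¬ α ≤ β → ¬ β ≤ α → S α ∩ S β = ∅)
    {σ : T → ℝ≥0∞} {C : ℝ≥0∞} (htree : ∀ α, ∑' β : {β // α ≤ β}, σ β ≤ C * μ (S α))
    {q : ℝ} (hq : 1 < q) (hg : Measurable g) :
    ∑' α, treeMaximal μ S g α ^ q * σ α ≤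
      4 ^ q * C * (1 - 2 ^ (1 - q))⁻¹ * ∫⁻ x, g x ^ q ∂μ := by
  set M := treeMaximal μ S g
  set E : ℤ → Set T := fun k => {α | 2 * 2 ^ k < M α}
  set G : ℤ → Ω → ℝ≥0∞ := fun k => {x | 2 ^ k < g x}.indicator g
  have hG : ∀ k, Measurable (G k) := fun k => hg.indicator (measurableSet_lt measurable_const hg)
  have hlevel : ∀ k : ℤ, ((2 : ℝ≥0∞) ^ k) ^ q * ∑' α, (E k).indicator σ α ≤
      ((2 : ℝ≥0∞) ^ k) ^ (q - 1) * (C * ∫⁻ x, G k x ∂μ) := fun k => by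
    have h0 : (2 : ℝ≥0∞) ^ k ≠ 0 := (ENNReal.zpow_pos two_ne_zero ofNat_ne_top k).ne'
    have htop : (2 : ℝ≥0∞) ^ k ≠ ⊤ := (ENNReal.zpow_lt_top two_ne_zero ofNat_ne_top k).ne
    conv_lhs => rw [← sub_add_cancel q 1, ENNReal.rpow_add _ _ h0 htop, ENNReal.rpow_one, mul_assoc]
    exact mul_le_mul_right (mul_tsum_indicator_two_mul_lt_le hmeas hdisj htree hg _) _
  calc ∑' α, M α ^ q * σ α
      ≤ ∑' α, (4 ^ q * ∑' k : ℤ, (if 2 * (2 : ℝ≥0∞) ^ k < M α then ((2 : ℝ≥0∞) ^ k) ^ q else 0))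
          * σ α := by
        gcongr with α; exact rpow_le_four_rpow_mul_tsum_ite (by linarith) _
    _ = 4 ^ q * ∑' k : ℤ, ((2 : ℝ≥0∞) ^ k) ^ q * ∑' α, (E k).indicator σ α := by
        simp only [mul_assoc, ← ENNReal.tsum_mul_right, ← ENNReal.tsum_mul_left]
        rw [ENNReal.tsum_comm]
        refine tsum_congr fun k => tsum_congr fun α => ?_
        by_cases h : 2 * (2 : ℝ≥0∞) ^ k < M α <;> simp [E, h]
    _ ≤ 4 ^ q * ∑' k : ℤ, ((2 : ℝ≥0∞) ^ k) ^ (q - 1) * (C * ∫⁻ x, G k x ∂μ) :=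
        mul_le_mul_right (ENNReal.tsum_le_tsum hlevel) _
    _ = 4 ^ q * C * ∫⁻ x, ∑' k : ℤ, ((2 : ℝ≥0∞) ^ k) ^ (q - 1) * G k x ∂μ := by
        rw [lintegral_tsum fun k => ((hG k).const_mul _).aemeasurable]
        simp only [lintegral_const_mul _ (hG _), mul_left_comm _ C, ENNReal.tsum_mul_left,
          mul_assoc]
    _ ≤ 4 ^ q * C * ∫⁻ x, (1 - 2 ^ (1 - q))⁻¹ * g x ^ q ∂μ := by
        gcongr with x
        simpa only [G, Set.indicator_apply, Set.mem_ofPred_eq] using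
          tsum_two_zpow_rpow_mul_ite_le hq (g x)
    _ = 4 ^ q * C * (1 - 2 ^ (1 - q))⁻¹ * ∫⁻ x, g x ^ q ∂μ := by
        rw [lintegral_const_mul' _ _ (inv_one_sub_two_rpow_ne_top hq)]
        ring

theorem tsum_Ici_le_of_forall_tsum_rpow_mul_le (hmeas : ∀ α, MeasurableSet (S α))
    (hanti : ∀ α β : T, α ≤ β → S β ⊆ S α) (hpos : ∀ α, 0 < μ (S α))
    {q : ℝ} (hq : 0 < q) {σ : T → ℝ≥0∞} {C : ℝ≥0∞}
    (hmax : ∀ g : Ω → ℝ≥0∞, Measurable g →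
      ∑' α, treeMaximal μ S g α ^ q * σ α ≤ C * ∫⁻ x, g x ^ q ∂μ)
    {α : T} (hα : μ (S α) ≠ ⊤) :
    ∑' β : {β // α ≤ β}, σ β ≤ C * μ (S α) := by
  set g : Ω → ℝ≥0∞ := (S α).indicator 1
  have hg : Measurable g := measurable_one.indicator (hmeas α)
  have hgq : ∫⁻ x, g x ^ q ∂μ = μ (S α) := by
    have : (fun x => g x ^ q) = g := funext fun x => by
      by_cases hx : x ∈ S α <;> simp [g, hx, ENNReal.zero_rpow_of_pos hq]
    rw [this, lintegral_indicator_one (hmeas α)]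
  have hM : ∀ β, α ≤ β → 1 ≤ treeMaximal μ S g β := fun β hβ => by
    have hβ_top : μ (S β) ≠ ⊤ := ne_top_of_le_ne_top hα (measure_mono (hanti α β hβ))
    have : (∫⁻ x in S β, g x ∂μ) / μ (S β) = 1 := by
      rw [lintegral_indicator_one (hmeas α), Measure.restrict_apply (hmeas α),
        Set.inter_eq_right.2 (hanti α β hβ), ENNReal.div_self (hpos β).ne' hβ_top]
    exact this ▸ average_le le_rfl
  calc ∑' β : {β // α ≤ β}, σ β
      ≤ ∑' β : {β // α ≤ β}, treeMaximal μ S g β ^ q * σ β :=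
        ENNReal.tsum_le_tsum fun β => le_mul_of_one_le_left' (ENNReal.one_le_rpow (hM β β.2) hq)
    _ ≤ ∑' β, treeMaximal μ S g β ^ q * σ β :=
        ENNReal.tsum_comp_le_tsum_of_injective Subtype.val_injective _
    _ ≤ C * μ (S α) := hgq ▸ hmax g hg

end treeMaximal

theorem stmt5_general {T Ω : Type*} [PartialOrder T] [Countable T]
    [WellFoundedLT T] [MeasurableSpace Ω] (μ : Measure Ω) (Sbar : T → Set Ω)
    (hmeas : ∀ α, MeasurableSet (Sbar α))
    (hanti : ∀ α β : T, α ≤ β → Sbar β ⊆ Sbar α)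
    (hdisj : ∀ α β : T, ¬ α ≤ β → ¬ β ≤ α → Sbar α ∩ Sbar β = ∅)
    (hpos : ∀ α, 0 < μ (Sbar α))
    (p p' : ℝ) (hp : 1 < p) (hp' : p' = p / (p - 1))
    (ρ : T → ℝ≥0∞) :
    (∃ C : ℝ≥0∞, C ≠ ⊤ ∧ ∀ α : T,
        ∑' β : {β : T // α ≤ β}, ρ β.1 ^ (1 - p') * μ (Sbar β.1) ^ p'
          ≤ C * μ (Sbar α)) ↔
    (∃ C' : ℝ≥0∞, C' ≠ ⊤ ∧ ∀ g : Ω → ℝ≥0∞, Measurable g →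
        ∑' α : T,
            (⨆ β ∈ Set.Iic α, (∫⁻ x in Sbar β, g x ∂μ) / μ (Sbar β)) ^ p'
              * (ρ α ^ (1 - p') * μ (Sbar α) ^ p')
          ≤ C' * ∫⁻ x, g x ^ p' ∂μ) := by
  have hq : 1 < p' := by
    rw [hp', one_lt_div (by linarith)]
    linarith
  constructor
  · rintro ⟨C, hC, htree⟩
    refine ⟨4 ^ p' * C * (1 - 2 ^ (1 - p'))⁻¹, ?_,
      fun g hg => treeMaximal.tsum_rpow_mul_le hmeas hdisj htree hq hg⟩
    have := inv_one_sub_two_rpow_ne_top hq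
    finiteness
  · rintro ⟨C', hC', hmax⟩
    -- `C' + 1` rather than `C'`: when `μ (Sbar α) = ⊤` the bound must hold even if `C' = 0`.
    refine ⟨C' + 1, by finiteness, fun α => ?_⟩
    rcases eq_or_ne (μ (Sbar α)) ⊤ with hα | hα
    · simp [hα]
    · exact (treeMaximal.tsum_Ici_le_of_forall_tsum_rpow_mul_le hmeas hanti hpos
        (by linarith) hmax hα).trans (mul_le_mul_left le_self_add _)

/-- Theorem 2 (tree maximal theorem): for a rooted tree `T` (root `⊥`), a positive
weight `ρ`, a positive measure `μ` on the closure `Ω = T̄` with shadows `Sbar α`,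
and `σ(α) = ρ(α)^(1−p') μ(S̄(α))^(p')`, the tree condition
`Σ_{β ≥ α} σ(β) ≤ C μ(S̄(α))` is equivalent to the maximal inequality
`Σ_α (Mg α)^(p') σ(α) ≤ C' ∫ g^(p') dμ`, where
`Mg(α) = max_{⊥ ≤ β ≤ α} (1/μ(S̄(β))) ∫_{S̄(β)} g dμ`. -/
theorem stmt5 {T Ω : Type*} [PartialOrder T] [OrderBot T] [Countable T]
    [WellFoundedLT T] [MeasurableSpace Ω] (μ : Measure Ω) (Sbar : T → Set Ω)
    (hmeas : ∀ α, MeasurableSet (Sbar α))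
    (hanti : ∀ α β : T, α ≤ β → Sbar β ⊆ Sbar α)
    (hdisj : ∀ α β : T, ¬ α ≤ β → ¬ β ≤ α → Sbar α ∩ Sbar β = ∅)
    (hpos : ∀ α, 0 < μ (Sbar α))
    (p p' : ℝ) (hp : 1 < p) (hp' : p' = p / (p - 1))
    (ρ : T → ℝ≥0∞) (hρ : ∀ α, ρ α ≠ 0 ∧ ρ α ≠ ⊤) :
    (∃ C : ℝ≥0∞, C ≠ ⊤ ∧ ∀ α : T,
        ∑' β : {β : T // α ≤ β}, ρ β.1 ^ (1 - p') * μ (Sbar β.1) ^ p'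
          ≤ C * μ (Sbar α)) ↔
    (∃ C' : ℝ≥0∞, C' ≠ ⊤ ∧ ∀ g : Ω → ℝ≥0∞, Measurable g →
        ∑' α : T,
            (⨆ β ∈ Set.Iic α, (∫⁻ x in Sbar β, g x ∂μ) / μ (Sbar β)) ^ p'
              * (ρ α ^ (1 - p') * μ (Sbar α) ^ p')
          ≤ C' * ∫⁻ x, g x ^ p' ∂μ) :=
  stmt5_general μ Sbar hmeas hanti hdisj hpos p p' hp hp' ρ
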